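/- Fix β ∈ (1,2) and a threshold sequence u = (u_n)_{n≥1} with each u_n ∈ [1,(β−1)⁻¹]. Then for Lebesgue-almost every x ∈ [0,1], k(m,u,x) is finite for all sufficiently large m and lim_{m→∞} k(m,u,x)/m = log 2/log β. -/

import Mathlib

/-! Telescoping the encoder gives `x = ∑_{n ≤ k} b_n β⁻ⁿ + β⁻ᵏ x_k` with `x_k ∈ [0, (β - 1)⁻¹]`,
so `x ∈ I_k(u, x)`, an interval of length `β⁻ᵏ (β - 1)⁻¹`. Fitting inside a dyadic interval of
length `2⁻ᵐ` forces `2ᵐ ≤ βᵏ`, whence `k(m) ≥ m log 2 / log β`. Conversely `I_k(u, x) ⊆ D_m(x)` as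
soon as its length is below the distance from `x` to the dyadic grid of order `m`. By
Borel–Cantelli, for each `θ < 1` almost every `x` is eventually at distance at least `2⁻ᵐ θᵐ` from
that grid, which gives `k(m) ≤ m (log 2 - log θ) / log β + O(1)`. -/

open MeasureTheory Filter Set Real

/-- Orbit of the β-encoder: `betaIter β u x n` is the iterate `x_n`, where
`x_0 = x` and `x_n = T_{u_n}(x_{n-1})`. -/
noncomputable def betaIter (β : ℝ) (u : ℕ → ℝ) (x : ℝ) : ℕ → ℝ
  | 0 => x
  | n + 1 =>
      if β * betaIter β u x n < u (n + 1) then β * betaIter β u x n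
      else β * betaIter β u x n - 1

/-- The bit `b_n` produced by the β-encoder at step `n ≥ 1`. -/
noncomputable def betaBit (β : ℝ) (u : ℕ → ℝ) (x : ℝ) (n : ℕ) : ℝ :=
  if β * betaIter β u x (n - 1) < u n then 0 else 1

/-- The interval `I_k(u,x)` determined by the first `k` output bits. -/
noncomputable def betaI (β : ℝ) (u : ℕ → ℝ) (x : ℝ) (k : ℕ) : Set ℝ :=
  Set.Icc (∑ n ∈ Finset.Icc 1 k, betaBit β u x n / β ^ n)
    ((∑ n ∈ Finset.Icc 1 k, betaBit β u x n / β ^ n) + (β ^ k)⁻¹ * (β - 1)⁻¹)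

/-- The dyadic interval of order `m` containing `x`: `[j/2^m, (j+1)/2^m)`,
the last one (containing 1) being `[1 - 2^{-m}, 1]`. -/
noncomputable def dyadic (m : ℕ) (x : ℝ) : Set ℝ :=
  if 1 - ((2:ℝ) ^ m)⁻¹ ≤ x then Set.Icc (1 - ((2:ℝ) ^ m)⁻¹) 1
  else Set.Ico ((⌊x * 2 ^ m⌋ : ℝ) / 2 ^ m) (((⌊x * 2 ^ m⌋ : ℝ) + 1) / 2 ^ m)

/-- `k(m, u, x) = inf { k ≥ 1 : I_k(u,x) ⊆ D_m(x) } ∈ ℕ ∪ {∞}`. -/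
noncomputable def kval (β : ℝ) (u : ℕ → ℝ) (x : ℝ) (m : ℕ) : ℕ∞ :=
  sInf {e : ℕ∞ | ∃ k : ℕ, e = (k : ℕ∞) ∧ 1 ≤ k ∧ betaI β u x k ⊆ dyadic m x}

theorem dyadic_subset_Icc (m : ℕ) (x : ℝ) :
    ∃ t : ℝ, dyadic m x ⊆ Icc t (t + ((2:ℝ) ^ m)⁻¹) := by
  unfold dyadic
  split_ifs
  · exact ⟨1 - ((2:ℝ) ^ m)⁻¹, fun y hy => ⟨hy.1, by linarith [hy.2]⟩⟩
  · refine ⟨(⌊x * 2 ^ m⌋ : ℝ) / 2 ^ m, fun y hy => ⟨hy.1, ?_⟩⟩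
    simpa only [add_div, one_div] using hy.2.le

theorem exists_Ioo_subset_dyadic {x : ℝ} (hx : x ∈ Icc (0:ℝ) 1) (m : ℕ) :
    ∃ j : ℕ, j < 2 ^ m ∧ x ∈ Icc ((j:ℝ) / 2 ^ m) (((j:ℝ) + 1) / 2 ^ m) ∧
      Ioo ((j:ℝ) / 2 ^ m) (((j:ℝ) + 1) / 2 ^ m) ⊆ dyadic m x := by
  have h2m : (0:ℝ) < 2 ^ m := by positivity
  unfold dyadic
  split_ifs with hlast
  · refine ⟨2 ^ m - 1, Nat.sub_lt (by positivity) one_pos, ?_⟩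
    have hj : ((2 ^ m - 1 : ℕ) : ℝ) / 2 ^ m = 1 - ((2:ℝ) ^ m)⁻¹ := by
      rw [Nat.cast_sub Nat.one_le_two_pow]
      field_simp
      norm_num
    have hj1 : (((2 ^ m - 1 : ℕ) : ℝ) + 1) / 2 ^ m = 1 := by
      rw [Nat.cast_sub Nat.one_le_two_pow]
      field_simp
      norm_num
    rw [hj, hj1]
    exact ⟨⟨hlast, hx.2⟩, Ioo_subset_Icc_self⟩
  · push Not at hlast
    obtain ⟨j, hj⟩ : ∃ j : ℕ, ⌊x * 2 ^ m⌋ = j :=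
      Int.eq_ofNat_of_zero_le (Int.floor_nonneg.2 (mul_nonneg hx.1 h2m.le))
    have hfloor : (j:ℝ) ≤ x * 2 ^ m ∧ x * 2 ^ m < j + 1 := by
      rw [← Int.cast_natCast, ← hj]
      exact ⟨Int.floor_le _, Int.lt_floor_add_one _⟩
    have hj_lt : (j:ℝ) < 2 ^ m := by
      have : x * 2 ^ m < 2 ^ m - 1 := by
        calc x * 2 ^ m < (1 - ((2:ℝ) ^ m)⁻¹) * 2 ^ m := by gcongr
          _ = 2 ^ m - 1 := by field_simp
      linarith
    refine ⟨j, by exact_mod_cast hj_lt, ⟨?_, ?_⟩, ?_⟩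
    · rw [div_le_iff₀ h2m]; exact hfloor.1
    · rw [le_div_iff₀ h2m]; exact hfloor.2.le
    · rw [hj, Int.cast_natCast]
      exact Ioo_subset_Ico_self

noncomputable def dyadicNbhd (θ : ℝ) (m : ℕ) : Set ℝ :=
  ⋃ i ∈ Finset.range (2 ^ m + 1), Metric.ball ((i:ℝ) / 2 ^ m) (((2:ℝ) ^ m)⁻¹ * θ ^ m)

theorem dyadicNbhd_mono {θ θ' : ℝ} (hθ : 0 ≤ θ) (hθθ' : θ ≤ θ') (m : ℕ) :
    dyadicNbhd θ m ⊆ dyadicNbhd θ' m :=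
  biUnion_mono subset_rfl fun _ _ => Metric.ball_subset_ball (by gcongr)

theorem volume_dyadicNbhd_le {θ : ℝ} (hθ : 0 ≤ θ) (m : ℕ) :
    volume (dyadicNbhd θ m) ≤ ENNReal.ofReal (4 * θ ^ m) := by
  calc volume (dyadicNbhd θ m)
      ≤ ∑ i ∈ Finset.range (2 ^ m + 1),
          volume (Metric.ball ((i:ℝ) / 2 ^ m) (((2:ℝ) ^ m)⁻¹ * θ ^ m)) :=
        measure_biUnion_finset_le _ _
    _ = ENNReal.ofReal (((2:ℝ) ^ m + 1) * (2 * (((2:ℝ) ^ m)⁻¹ * θ ^ m))) := by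
        rw [ENNReal.ofReal_mul (by positivity)]
        simp [Real.volume_ball, ENNReal.ofReal_add]
    _ ≤ ENNReal.ofReal (4 * θ ^ m) := by
        apply ENNReal.ofReal_le_ofReal
        have h2m : (1:ℝ) ≤ 2 ^ m := one_le_pow₀ one_le_two
        have : ((2:ℝ) ^ m + 1) * (2 * (((2:ℝ) ^ m)⁻¹ * θ ^ m))
            = (2 + 2 * ((2:ℝ) ^ m)⁻¹) * θ ^ m := by
          field_simp
        rw [this]
        gcongr
        linarith [inv_le_one_of_one_le₀ h2m]

theorem tsum_volume_dyadicNbhd_ne_top {θ : ℝ} (hθ0 : 0 ≤ θ) (hθ1 : θ < 1) :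
    ∑' m, volume (dyadicNbhd θ m) ≠ ⊤ := by
  have hsum : Summable fun m : ℕ => 4 * θ ^ m :=
    (summable_geometric_of_lt_one hθ0 hθ1).mul_left 4
  refine ne_top_of_le_ne_top ?_ (ENNReal.tsum_le_tsum fun m => volume_dyadicNbhd_le hθ0 m)
  rw [← ENNReal.ofReal_tsum_of_nonneg (fun m => by positivity) hsum]
  exact ENNReal.ofReal_ne_top

theorem ae_eventually_notMem_dyadicNbhd :
    ∀ᵐ x : ℝ, ∀ θ, 0 ≤ θ → θ < 1 → ∀ᶠ m in atTop, x ∉ dyadicNbhd θ m := by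
  have hrat : ∀ᵐ x : ℝ, ∀ q : {q : ℚ // 0 ≤ (q:ℝ) ∧ (q:ℝ) < 1},
      ∀ᶠ m in atTop, x ∉ dyadicNbhd q m :=
    ae_all_iff.2 fun q => ae_eventually_notMem (tsum_volume_dyadicNbhd_ne_top q.2.1 q.2.2)
  filter_upwards [hrat] with x hx θ hθ0 hθ1
  obtain ⟨q, hθq, hq1⟩ := exists_rat_btwn hθ1
  exact (hx ⟨q, hθ0.trans hθq.le, hq1⟩).mono fun m hm hmem =>
    hm (dyadicNbhd_mono hθ0 hθq.le m hmem)

theorem exists_nat_lt_pow_le_logb_add_two {b c : ℝ} (hb : 1 < b) (hc : 1 ≤ c) :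
    ∃ k : ℕ, 1 ≤ k ∧ c < b ^ k ∧ (k : ℝ) ≤ logb b c + 2 := by
  have hlogb := logb_nonneg hb hc
  refine ⟨⌈logb b c⌉₊ + 1, Nat.le_add_left 1 _, ?_, ?_⟩
  · rw [← rpow_natCast, ← logb_lt_iff_lt_rpow hb (by linarith)]
    push_cast
    linarith [Nat.le_ceil (logb b c)]
  · push_cast
    linarith [Nat.ceil_lt_add_one hlogb]

theorem tendsto_div_of_le_of_forall_le_add {a : ℕ → ℝ} {L C : ℝ}
    (hlo : ∀ᶠ m in atTop, L * m ≤ a m)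
    (hup : ∀ ε > 0, ∀ᶠ m in atTop, a m ≤ (L + ε) * m + C) :
    Tendsto (fun m => a m / m) atTop (nhds L) := by
  refine tendsto_order.2 ⟨fun L' hL' => ?_, fun L' hL' => ?_⟩
  · filter_upwards [hlo, eventually_gt_atTop 0] with m hm hm0
    have hm0' : (0:ℝ) < m := Nat.cast_pos.2 hm0
    rw [lt_div_iff₀ hm0']
    nlinarith
  · set ε := (L' - L) / 2
    have hε : L + ε + 0 < L' := by simp only [ε]; linarith
    have hlim : Tendsto (fun m : ℕ => L + ε + C / m) atTop (nhds (L + ε + 0)) :=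
      tendsto_const_nhds.add (tendsto_const_div_atTop_nhds_zero_nat C)
    filter_upwards [hup ε (by simp only [ε]; linarith), hlim.eventually (gt_mem_nhds hε),
      eventually_gt_atTop 0] with m hm hlim_m hm0
    have hm0' : (0:ℝ) < m := Nat.cast_pos.2 hm0
    calc a m / m ≤ L + ε + C / m := by
          rw [div_le_iff₀ hm0', add_mul, div_mul_cancel₀ _ hm0'.ne']
          exact hm
      _ < L' := hlim_m

section BetaEncoder

variable {β : ℝ} {u : ℕ → ℝ} {x : ℝ}

theorem betaIter_mem_Icc (hβ : 1 < β) (hu : ∀ n, 1 ≤ n → u n ∈ Icc (1:ℝ) (β - 1)⁻¹)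
    (hx : x ∈ Icc (0:ℝ) (β - 1)⁻¹) (n : ℕ) : betaIter β u x n ∈ Icc (0:ℝ) (β - 1)⁻¹ := by
  induction n with
  | zero => exact hx
  | succ n ih =>
    obtain ⟨hy0, hy1⟩ := ih
    obtain ⟨hu1, hu2⟩ := hu (n + 1) n.succ_pos
    have hβ_mul : β * (β - 1)⁻¹ = (β - 1)⁻¹ + 1 := by
      field_simp [(sub_pos.2 hβ).ne']
      ring
    simp only [betaIter]
    split_ifs with h
    · exact ⟨by positivity, h.le.trans hu2⟩
    · push Not at h
      have : β * betaIter β u x n ≤ β * (β - 1)⁻¹ := by gcongr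
      constructor <;> linarith

theorem betaBit_div_add_betaIter_succ (hβ : β ≠ 0) (k : ℕ) :
    betaBit β u x (k + 1) / β ^ (k + 1) + (β ^ (k + 1))⁻¹ * betaIter β u x (k + 1)
      = (β ^ k)⁻¹ * betaIter β u x k := by
  simp only [betaBit, betaIter, Nat.add_sub_cancel]
  split_ifs <;> field_simp <;> ring

theorem sum_betaBit_add_betaIter (hβ : β ≠ 0) (k : ℕ) :
    ∑ n ∈ Finset.Icc 1 k, betaBit β u x n / β ^ n + (β ^ k)⁻¹ * betaIter β u x k = x := by
  induction k with
  | zero => simp [betaIter]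
  | succ k ih =>
    rw [Finset.sum_Icc_succ_top k.succ_pos, add_assoc, betaBit_div_add_betaIter_succ hβ, ih]

theorem mem_betaI (hβ : 1 < β) (hu : ∀ n, 1 ≤ n → u n ∈ Icc (1:ℝ) (β - 1)⁻¹)
    (hx : x ∈ Icc (0:ℝ) (β - 1)⁻¹) (k : ℕ) : x ∈ betaI β u x k := by
  have hsum := sum_betaBit_add_betaIter (u := u) (x := x) (by positivity) k
  obtain ⟨h0, h1⟩ := betaIter_mem_Icc hβ hu hx k
  have hpow : (0:ℝ) < (β ^ k)⁻¹ := by positivity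
  constructor <;> nlinarith

theorem logb_mul_le_of_betaI_subset_dyadic (hβ1 : 1 < β) (hβ2 : β ≤ 2) {m k : ℕ}
    (hsub : betaI β u x k ⊆ dyadic m x) : logb β 2 * m ≤ k := by
  obtain ⟨t, ht⟩ := dyadic_subset_Icc m x
  set S := ∑ n ∈ Finset.Icc 1 k, betaBit β u x n / β ^ n
  have hβk : (0:ℝ) < β ^ k := by positivity
  have hβ1' : (0:ℝ) < β - 1 := sub_pos.2 hβ1
  have hlen : (0:ℝ) ≤ (β ^ k)⁻¹ * (β - 1)⁻¹ := by positivity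
  have hleft := ht (hsub ⟨le_rfl, by linarith⟩ : S ∈ dyadic m x)
  have hright := ht (hsub ⟨by linarith, le_rfl⟩ : S + (β ^ k)⁻¹ * (β - 1)⁻¹ ∈ dyadic m x)
  have hpow : (2:ℝ) ^ m ≤ β ^ k := by
    have hle : (β ^ k * (β - 1))⁻¹ ≤ ((2:ℝ) ^ m)⁻¹ := by
      rw [mul_inv]; linarith [hleft.1, hright.2]
    have := (inv_le_inv₀ (by positivity) (by positivity)).1 hle
    nlinarith
  calc logb β 2 * m = logb β (2 ^ m) := by rw [logb_pow, mul_comm]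
    _ ≤ logb β (β ^ k) := logb_le_logb_of_le hβ1 (by positivity) hpow
    _ = k := by rw [logb_pow, logb_self_eq_one hβ1, mul_one]

theorem logb_mul_le_kval_toNat (hβ1 : 1 < β) (hβ2 : β ≤ 2) {m : ℕ}
    (hne : kval β u x m ≠ ⊤) : logb β 2 * m ≤ (kval β u x m).toNat := by
  have hnonempty : {e : ℕ∞ | ∃ k : ℕ, e = k ∧ 1 ≤ k ∧ betaI β u x k ⊆ dyadic m x}.Nonempty := by
    refine nonempty_iff_ne_empty.2 fun hempty => hne ?_
    rw [kval, hempty]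
    exact sInf_empty
  obtain ⟨k, hk, -, hsub⟩ := csInf_mem hnonempty
  rw [kval, hk, ENat.toNat_natCast]
  exact logb_mul_le_of_betaI_subset_dyadic hβ1 hβ2 hsub

theorem betaI_subset_dyadic_of_notMem_dyadicNbhd (hβ1 : 1 < β) (hβ2 : β ≤ 2)
    (hu : ∀ n, 1 ≤ n → u n ∈ Icc (1:ℝ) (β - 1)⁻¹) (hx : x ∈ Icc (0:ℝ) 1)
    {θ : ℝ} {m k : ℕ} (hfar : x ∉ dyadicNbhd θ m) (hk : 2 ^ m < β ^ k * (β - 1) * θ ^ m) :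
    betaI β u x k ⊆ dyadic m x := by
  obtain ⟨j, hj, ⟨hxj, hxj1⟩, hsub⟩ := exists_Ioo_subset_dyadic hx m
  have hP : (0:ℝ) < β ^ k * (β - 1) := mul_pos (by positivity) (sub_pos.2 hβ1)
  have hlen : (β ^ k)⁻¹ * (β - 1)⁻¹ < ((2:ℝ) ^ m)⁻¹ * θ ^ m :=
    calc (β ^ k)⁻¹ * (β - 1)⁻¹ = ((2:ℝ) ^ m)⁻¹ * (2 ^ m / (β ^ k * (β - 1))) := by
          field_simp
      _ < ((2:ℝ) ^ m)⁻¹ * θ ^ m := by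
          gcongr
          rwa [div_lt_iff₀ hP, mul_comm]
  have hdist : ∀ i : ℕ, i ≤ 2 ^ m → ((2:ℝ) ^ m)⁻¹ * θ ^ m ≤ |x - i / 2 ^ m| := by
    intro i hi
    by_contra! hlt
    exact hfar (mem_biUnion (Finset.mem_range.2 (Nat.lt_succ_of_le hi))
      (by rwa [Metric.mem_ball, Real.dist_eq]))
  have hleft := hdist j hj.le
  have hright := hdist (j + 1) hj
  rw [abs_of_nonneg (by linarith)] at hleft
  push_cast at hright
  rw [abs_of_nonpos (by linarith)] at hright
  have hxβ : x ∈ Icc (0:ℝ) (β - 1)⁻¹ :=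
    ⟨hx.1, hx.2.trans ((one_le_inv₀ (sub_pos.2 hβ1)).2 (by linarith))⟩
  obtain ⟨hS, hS'⟩ := mem_betaI hβ1 hu hxβ k
  intro y hy
  exact hsub ⟨by linarith [hy.1], by linarith [hy.2]⟩

theorem kval_ne_top_and_toNat_le (hβ1 : 1 < β) (hβ2 : β ≤ 2)
    (hu : ∀ n, 1 ≤ n → u n ∈ Icc (1:ℝ) (β - 1)⁻¹) (hx : x ∈ Icc (0:ℝ) 1)
    {ε : ℝ} (hε : 0 ≤ ε) {m : ℕ} (hfar : x ∉ dyadicNbhd (β ^ ε)⁻¹ m) :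
    kval β u x m ≠ ⊤ ∧
      ((kval β u x m).toNat : ℝ) ≤ (logb β 2 + ε) * m + (2 - logb β (β - 1)) := by
  have hβ1' : 0 < β - 1 := sub_pos.2 hβ1
  have hβε : 1 ≤ β ^ ε := one_le_rpow hβ1.le hε
  have hc : 1 ≤ 2 ^ m * (β ^ ε) ^ m / (β - 1) := by
    rw [le_div_iff₀ hβ1', one_mul]
    nlinarith [one_le_pow₀ (M₀ := ℝ) (a := 2) one_le_two (n := m), one_le_pow₀ hβε (n := m)]
  obtain ⟨k, hk1, hck, hkle⟩ := exists_nat_lt_pow_le_logb_add_two hβ1 hc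
  have hsub : betaI β u x k ⊆ dyadic m x := by
    refine betaI_subset_dyadic_of_notMem_dyadicNbhd hβ1 hβ2 hu hx hfar ?_
    rw [div_lt_iff₀ hβ1'] at hck
    rw [inv_pow, ← div_eq_mul_inv, lt_div_iff₀ (by positivity)]
    linarith
  have hle : kval β u x m ≤ k := sInf_le ⟨k, rfl, hk1, hsub⟩
  have hne : kval β u x m ≠ ⊤ := ne_top_of_le_ne_top (ENat.natCast_ne_top k) hle
  refine ⟨hne, ?_⟩
  have hlogb : logb β (2 ^ m * (β ^ ε) ^ m / (β - 1)) = (logb β 2 + ε) * m - logb β (β - 1) := by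
    rw [logb_div (by positivity) hβ1'.ne', logb_mul (by positivity) (by positivity), logb_pow,
      logb_pow, logb_rpow (by positivity) hβ1.ne']
    ring
  calc ((kval β u x m).toNat : ℝ) ≤ k := by exact_mod_cast ENat.toNat_le_of_le_natCast hle
    _ ≤ (logb β 2 + ε) * m + (2 - logb β (β - 1)) := by linarith

end BetaEncoder

/-- for Lebesgue-a.e. `x ∈ [0,1]`, `k(m,u,x)` is finite for all sufficiently
large `m` and `k(m,u,x)/m → log 2/log β` as `m → ∞`. -/
theorem stmt_3 (β : ℝ) (hβ : β ∈ Set.Ioo (1:ℝ) 2) (u : ℕ → ℝ)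
    (hu : ∀ n, 1 ≤ n → u n ∈ Set.Icc (1:ℝ) (β - 1)⁻¹) :
    ∀ᵐ x ∂(volume.restrict (Set.Icc (0:ℝ) 1)),
      (∃ M : ℕ, ∀ m ≥ M, kval β u x m ≠ ⊤) ∧
      Filter.Tendsto (fun m : ℕ => ((kval β u x m).toNat : ℝ) / (m : ℝ))
        Filter.atTop (nhds (Real.log 2 / Real.log β)) := by
  obtain ⟨hβ1, hβ2⟩ := hβ
  rw [ae_restrict_iff' measurableSet_Icc, log_div_log]
  filter_upwards [ae_eventually_notMem_dyadicNbhd] with x hfar hx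
  have hup : ∀ ε > 0, ∀ᶠ m in atTop, kval β u x m ≠ ⊤ ∧
      ((kval β u x m).toNat : ℝ) ≤ (logb β 2 + ε) * m + (2 - logb β (β - 1)) :=
    fun ε hε => (hfar _ (by positivity) (inv_lt_one_of_one_lt₀ (one_lt_rpow hβ1 hε))).mono
      fun m hm => kval_ne_top_and_toNat_le hβ1 hβ2.le hu hx hε.le hm
  refine ⟨eventually_atTop.1 ((hup 1 one_pos).mono fun _ h => h.1),
    tendsto_div_of_le_of_forall_le_add ?_ fun ε hε => (hup ε hε).mono fun _ h => h.2⟩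
  exact (hup 1 one_pos).mono fun m h => logb_mul_le_kval_toNat hβ1 hβ2.le h.1
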